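/- Let (φ : G ⟹ K, ψ : B ⟹ F) be a comodule natural transformation between comodule functors (G, δ^(G)) and (K, δ^(K)) over opmonoidal functors B and F respectively. Define a new coaction λ on G by λ_{m,x} = (Gm ◀ ψ_x) ∘ δ^(G)_{m,x}. Then λ is a coassociative and counital coaction of F on G, and φ : (G, λ) ⟹ (K, δ^(K)) is a morphism of comodule functors over F (i.e. a comodule natural transformation with second component id_F). -/

import Mathlib

open CategoryTheory Category MonoidalCategory

universe v₁ v₂ u₁ u₂

/-- A (strict) right module category of a monoidal category `C`. -/
structure RAct (C : Type u₁) [Category.{v₁} C] [MonoidalCategory C]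
    (M : Type u₂) [Category.{v₂} M] where
  smul : M → C → M
  smulHom : ∀ {m m' : M} {x x' : C}, (m ⟶ m') → (x ⟶ x') → (smul m x ⟶ smul m' x')
  smulHom_id : ∀ (m : M) (x : C), smulHom (𝟙 m) (𝟙 x) = 𝟙 (smul m x)
  smulHom_comp :
    ∀ {m m' m'' : M} {x x' x'' : C} (f : m ⟶ m') (f' : m' ⟶ m'')
      (g : x ⟶ x') (g' : x' ⟶ x''),
      smulHom (f ≫ f') (g ≫ g') = smulHom f g ≫ smulHom f' g'
  assoc : ∀ (m : M) (x y : C), smul m (x ⊗ y) = smul (smul m x) y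
  unit : ∀ (m : M), smul m (𝟙_ C) = m
  assoc_hom :
    ∀ {m m' : M} {x x' y y' : C} (f : m ⟶ m') (g : x ⟶ x') (h : y ⟶ y'),
      smulHom f (g ⊗ₘ h) =
        eqToHom (assoc m x y) ≫ smulHom (smulHom f g) h ≫ eqToHom (assoc m' x' y').symm
  unit_hom :
    ∀ {m m' : M} (f : m ⟶ m'),
      smulHom f (𝟙 (𝟙_ C)) = eqToHom (unit m) ≫ f ≫ eqToHom (unit m').symm

/-- An opmonoidal structure on a functor between monoidal categories. -/
structure OpmonStr {C : Type u₁} [Category.{v₁} C] [MonoidalCategory C]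
    {D : Type u₂} [Category.{v₂} D] [MonoidalCategory D] (F : C ⥤ D) where
  d : ∀ x y : C, F.obj (x ⊗ y) ⟶ F.obj x ⊗ F.obj y
  e : F.obj (𝟙_ C) ⟶ 𝟙_ D
  d_natural : ∀ {x x' y y' : C} (f : x ⟶ x') (g : y ⟶ y'),
    F.map (f ⊗ₘ g) ≫ d x' y' = d x y ≫ (F.map f ⊗ₘ F.map g)
  coassoc : ∀ x y z : C,
    d (x ⊗ y) z ≫ (d x y ⊗ₘ 𝟙 (F.obj z)) ≫ (α_ (F.obj x) (F.obj y) (F.obj z)).hom =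
      F.map (α_ x y z).hom ≫ d x (y ⊗ z) ≫ (𝟙 (F.obj x) ⊗ₘ d y z)
  counit_left : ∀ x : C,
    d (𝟙_ C) x ≫ (e ⊗ₘ 𝟙 (F.obj x)) ≫ (λ_ (F.obj x)).hom = F.map (λ_ x).hom
  counit_right : ∀ x : C,
    d x (𝟙_ C) ≫ (𝟙 (F.obj x) ⊗ₘ e) ≫ (ρ_ (F.obj x)).hom = F.map (ρ_ x).hom

/-- A bimonad structure on a given monad `t` on a monoidal category. -/
structure BimonadStr {C : Type u₁} [Category.{v₁} C] [MonoidalCategory C]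
    (t : Monad C) where
  op : OpmonStr t.toFunctor
  mul_opmon : ∀ x y : C,
    t.μ.app (x ⊗ y) ≫ op.d x y =
      t.map (op.d x y) ≫ op.d (t.obj x) (t.obj y) ≫ (t.μ.app x ⊗ₘ t.μ.app y)
  mul_counit : t.μ.app (𝟙_ C) ≫ op.e = t.map op.e ≫ op.e
  unit_opmon : ∀ x y : C, t.η.app (x ⊗ y) ≫ op.d x y = t.η.app x ⊗ₘ t.η.app y
  unit_counit : t.η.app (𝟙_ C) ≫ op.e = 𝟙 (𝟙_ C)

/-- A comodule functor structure on `G : M ⥤ N` over an opmonoidal functor `(F, OF)`. -/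
structure ComodStr {C : Type u₁} [Category.{v₁} C] [MonoidalCategory C]
    {D : Type u₂} [Category.{v₂} D] [MonoidalCategory D]
    {M : Type u₁} [Category.{v₁} M] {N : Type u₂} [Category.{v₂} N]
    (F : C ⥤ D) (OF : OpmonStr F)
    (ρM : RAct C M) (ρN : RAct D N) (G : M ⥤ N) where
  δ : ∀ (m : M) (x : C), G.obj (ρM.smul m x) ⟶ ρN.smul (G.obj m) (F.obj x)
  natural : ∀ {m m' : M} {x x' : C} (f : m ⟶ m') (g : x ⟶ x'),
    G.map (ρM.smulHom f g) ≫ δ m' x' = δ m x ≫ ρN.smulHom (G.map f) (F.map g)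
  coassoc : ∀ (m : M) (x y : C),
    δ m (x ⊗ y) ≫ ρN.smulHom (𝟙 (G.obj m)) (OF.d x y) ≫
        eqToHom (ρN.assoc (G.obj m) (F.obj x) (F.obj y)) =
      G.map (eqToHom (ρM.assoc m x y)) ≫ δ (ρM.smul m x) y ≫
        ρN.smulHom (δ m x) (𝟙 (F.obj y))
  counital : ∀ m : M,
    δ m (𝟙_ C) ≫ ρN.smulHom (𝟙 (G.obj m)) OF.e ≫ eqToHom (ρN.unit (G.obj m)) =
      G.map (eqToHom (ρM.unit m))

/-- A coaction of a bimonad `(t, bs)` on a monad `K`, making `K` a comodule monad. -/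
structure Coaction {C : Type u₁} [Category.{v₁} C] [MonoidalCategory C]
    {M : Type u₁} [Category.{v₁} M]
    (t : Monad C) (bs : BimonadStr t) (ρ : RAct C M) (K : Monad M) where
  δ : ∀ (m : M) (x : C), K.obj (ρ.smul m x) ⟶ ρ.smul (K.obj m) (t.obj x)
  natural : ∀ {m m' : M} {x x' : C} (f : m ⟶ m') (g : x ⟶ x'),
    K.map (ρ.smulHom f g) ≫ δ m' x' = δ m x ≫ ρ.smulHom (K.map f) (t.map g)
  coassoc : ∀ (m : M) (x y : C),
    δ m (x ⊗ y) ≫ ρ.smulHom (𝟙 (K.obj m)) (bs.op.d x y) ≫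
        eqToHom (ρ.assoc (K.obj m) (t.obj x) (t.obj y)) =
      K.map (eqToHom (ρ.assoc m x y)) ≫ δ (ρ.smul m x) y ≫
        ρ.smulHom (δ m x) (𝟙 (t.obj y))
  counital : ∀ m : M,
    δ m (𝟙_ C) ≫ ρ.smulHom (𝟙 (K.obj m)) bs.op.e ≫ eqToHom (ρ.unit (K.obj m)) =
      K.map (eqToHom (ρ.unit m))
  mul_comod : ∀ (m : M) (x : C),
    K.μ.app (ρ.smul m x) ≫ δ m x =
      K.map (δ m x) ≫ δ (K.obj m) (t.obj x) ≫ ρ.smulHom (K.μ.app m) (t.μ.app x)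
  unit_comod : ∀ (m : M) (x : C),
    K.η.app (ρ.smul m x) ≫ δ m x = ρ.smulHom (K.η.app m) (t.η.app x)

namespace RAct

variable {C : Type u₁} [Category.{v₁} C] [MonoidalCategory C]
  {M : Type u₂} [Category.{v₂} M] (ρ : RAct C M)

theorem smulHom_comp_smulHom {m m' m'' : M} {x x' x'' : C} (f : m ⟶ m') (f' : m' ⟶ m'')
    (g : x ⟶ x') (g' : x' ⟶ x'') :
    ρ.smulHom f g ≫ ρ.smulHom f' g' = ρ.smulHom (f ≫ f') (g ≫ g') :=
  (ρ.smulHom_comp f f' g g').symm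

theorem smulHom_comp_smulHom_assoc {m m' m'' : M} {x x' x'' : C} (f : m ⟶ m')
    (f' : m' ⟶ m'') (g : x ⟶ x') (g' : x' ⟶ x'') {n : M} (h : ρ.smul m'' x'' ⟶ n) :
    ρ.smulHom f g ≫ ρ.smulHom f' g' ≫ h = ρ.smulHom (f ≫ f') (g ≫ g') ≫ h := by
  rw [← Category.assoc, smulHom_comp_smulHom]

end RAct

section Opmonoidal

variable {C : Type u₁} [Category.{v₁} C] [MonoidalCategory C]
  {D : Type u₂} [Category.{v₂} D] [MonoidalCategory D]

structure OpmonStr.IsOpmonNatTrans {B F : C ⥤ D} (OB : OpmonStr B) (OF : OpmonStr F)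
    (ψ : B ⟶ F) : Prop where
  app_tensor_d : ∀ x y : C, ψ.app (x ⊗ y) ≫ OF.d x y = OB.d x y ≫ (ψ.app x ⊗ₘ ψ.app y)
  app_unit_e : ψ.app (𝟙_ C) ≫ OF.e = OB.e

end Opmonoidal

namespace ComodStr

variable {C : Type u₁} [Category.{v₁} C] [MonoidalCategory C]
  {D : Type u₂} [Category.{v₂} D] [MonoidalCategory D]
  {M : Type u₁} [Category.{v₁} M] {N : Type u₂} [Category.{v₂} N]
  {B F : C ⥤ D} {OB : OpmonStr B} {OF : OpmonStr F}
  {ρM : RAct C M} {ρN : RAct D N} {G K : M ⥤ N}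

def pushforward (cG : ComodStr B OB ρM ρN G) (ψ : B ⟶ F) (hψ : OB.IsOpmonNatTrans OF ψ) :
    ComodStr F OF ρM ρN G where
  δ m x := cG.δ m x ≫ ρN.smulHom (𝟙 (G.obj m)) (ψ.app x)
  natural f g := by
    rw [← assoc, cG.natural, assoc, ρN.smulHom_comp_smulHom, assoc,
      ρN.smulHom_comp_smulHom, ψ.naturality, id_comp, comp_id]
  coassoc m x y := by
    -- once `ψ_{x ⊗ y}` is traded for `ψ_x ⊗ ψ_y`, both sides pass through the
    -- coassociativity square of `δ^G`
    have split : ρN.smulHom (cG.δ m x ≫ ρN.smulHom (𝟙 (G.obj m)) (ψ.app x)) (ψ.app y) =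
        ρN.smulHom (cG.δ m x) (𝟙 (B.obj y)) ≫
          ρN.smulHom (ρN.smulHom (𝟙 (G.obj m)) (ψ.app x)) (ψ.app y) := by
      rw [← ρN.smulHom_comp, id_comp]
    rw [assoc, ρN.smulHom_comp_smulHom_assoc, hψ.app_tensor_d, ρN.smulHom_comp, ρN.assoc_hom]
    simp only [assoc, eqToHom_trans, eqToHom_refl, comp_id, ρN.smulHom_comp_smulHom, id_comp]
    rw [split, ← reassoc_of% (cG.coassoc m x y)]
  counital m := by
    rw [assoc, ρN.smulHom_comp_smulHom_assoc, id_comp, hψ.app_unit_e, cG.counital]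

theorem pushforward_δ (cG : ComodStr B OB ρM ρN G) (ψ : B ⟶ F)
    (hψ : OB.IsOpmonNatTrans OF ψ) (m : M) (x : C) :
    (cG.pushforward ψ hψ).δ m x = cG.δ m x ≫ ρN.smulHom (𝟙 (G.obj m)) (ψ.app x) :=
  rfl

def IsComodHom (cG : ComodStr B OB ρM ρN G) (cK : ComodStr F OF ρM ρN K) (φ : G ⟶ K)
    (ψ : B ⟶ F) : Prop :=
  ∀ (m : M) (x : C), φ.app (ρM.smul m x) ≫ cK.δ m x = cG.δ m x ≫ ρN.smulHom (φ.app m) (ψ.app x)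

theorem IsComodHom.pushforward {cG : ComodStr B OB ρM ρN G} {cK : ComodStr F OF ρM ρN K}
    {φ : G ⟶ K} {ψ : B ⟶ F} (h : IsComodHom cG cK φ ψ) (hψ : OB.IsOpmonNatTrans OF ψ) :
    IsComodHom (cG.pushforward ψ hψ) cK φ (𝟙 F) := by
  intro m x
  rw [h, pushforward_δ, assoc, ρN.smulHom_comp_smulHom, id_comp, NatTrans.id_app, comp_id]

end ComodStr

/-- Let `(φ : G ⟹ K, ψ : B ⟹ F)` be a comodule natural transformation between comodule
functors over opmonoidal functors `B` and `F`, with `ψ` opmonoidal.  Then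
`λ_{m,x} = (Gm ◀ ψ_x) ∘ δ^G_{m,x}` is a natural, coassociative and counital coaction of
`F` on `G`, and `φ` is a morphism of comodule functors `(G, λ) ⟹ (K, δ^K)` over `F`. -/
theorem stmt17 {C : Type u₁} [Category.{v₁} C] [MonoidalCategory C]
    {D : Type u₂} [Category.{v₂} D] [MonoidalCategory D]
    {M : Type u₁} [Category.{v₁} M] {N : Type u₂} [Category.{v₂} N]
    (B F : C ⥤ D) (OB : OpmonStr B) (OF : OpmonStr F)
    (ρM : RAct C M) (ρN : RAct D N)
    (G K : M ⥤ N)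
    (cG : ComodStr B OB ρM ρN G) (cK : ComodStr F OF ρM ρN K)
    (φ : G ⟶ K) (ψ : B ⟶ F)
    (hψd : ∀ x y : C, ψ.app (x ⊗ y) ≫ OF.d x y = OB.d x y ≫ (ψ.app x ⊗ₘ ψ.app y))
    (hψe : ψ.app (𝟙_ C) ≫ OF.e = OB.e)
    (hcomod : ∀ (m : M) (x : C),
      φ.app (ρM.smul m x) ≫ cK.δ m x = cG.δ m x ≫ ρN.smulHom (φ.app m) (ψ.app x)) :
    let lam : ∀ (m : M) (x : C), G.obj (ρM.smul m x) ⟶ ρN.smul (G.obj m) (F.obj x) :=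
      fun m x => cG.δ m x ≫ ρN.smulHom (𝟙 (G.obj m)) (ψ.app x)
    (∀ {m m' : M} {x x' : C} (f : m ⟶ m') (g : x ⟶ x'),
      G.map (ρM.smulHom f g) ≫ lam m' x' = lam m x ≫ ρN.smulHom (G.map f) (F.map g)) ∧
    (∀ (m : M) (x y : C),
      lam m (x ⊗ y) ≫ ρN.smulHom (𝟙 (G.obj m)) (OF.d x y) ≫
          eqToHom (ρN.assoc (G.obj m) (F.obj x) (F.obj y)) =
        G.map (eqToHom (ρM.assoc m x y)) ≫ lam (ρM.smul m x) y ≫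
          ρN.smulHom (lam m x) (𝟙 (F.obj y))) ∧
    (∀ m : M,
      lam m (𝟙_ C) ≫ ρN.smulHom (𝟙 (G.obj m)) OF.e ≫ eqToHom (ρN.unit (G.obj m)) =
        G.map (eqToHom (ρM.unit m))) ∧
    (∀ (m : M) (x : C),
      φ.app (ρM.smul m x) ≫ cK.δ m x = lam m x ≫ ρN.smulHom (φ.app m) (𝟙 (F.obj x))) := by
  intro lam
  have hψ : OB.IsOpmonNatTrans OF ψ := ⟨hψd, hψe⟩
  have hφ : cG.IsComodHom cK φ ψ := hcomod
  let cGF := cG.pushforward ψ hψ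
  exact ⟨cGF.natural, cGF.coassoc, cGF.counital, hφ.pushforward hψ⟩
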